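/- arXiv:0903.0228 — 2 statements merged into one kernel-verified Lean document; each statement's English description precedes it below -/
import Mathlib

section
/- Let E be a real inner product space, let e be a nonzero vector of E, and let v₁, …, v_l be finitely many nonzero vectors of E such that ⟨vᵢ, e⟩ ≥ 0 for every i. Set v = v₁ + ⋯ + v_l and assume v ≠ 0. Then the angle between v and e satisfies angle(v, e) ≤ max{angle(v₁, e), …, angle(v_l, e)}. -/
/-!
For `0 ≤ θ ≤ π` and nonzero `x`, `e`, `angle x e ≤ θ` amounts to `‖x‖ * ‖e‖ * cos θ ≤ ⟪x, e⟫`. When `cos θ ≥ 0`,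
this inequality is preserved under addition by the triangle inequality, so the cone of
vectors making angle at most `θ` with `e` is closed under sums. Taking `θ` to be the largest
angle `angle (v i) e`, which is at most `π / 2` because `⟪v i, e⟫ ≥ 0`, gives the theorem.
-/

open scoped RealInnerProductSpace

open InnerProductGeometry Real

namespace InnerProductGeometry

variable {E : Type*} [NormedAddCommGroup E] [InnerProductSpace ℝ E]

theorem angle_le_pi_div_two_of_inner_nonneg {x y : E} (h : 0 ≤ ⟪x, y⟫) : angle x y ≤ π / 2 := by
  rw [angle, ← arccos_zero]
  exact arccos_le_arccos (div_nonneg h (by positivity))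

theorem norm_mul_norm_mul_cos_le_inner_of_angle_le {x y : E} {θ : ℝ} (hθ : θ ≤ π)
    (h : angle x y ≤ θ) : ‖x‖ * ‖y‖ * cos θ ≤ ⟪x, y⟫ := by
  rw [← cos_angle_mul_norm_mul_norm, mul_comm (cos _)]
  gcongr
  exact cos_le_cos_of_nonneg_of_le_pi (angle_nonneg x y) hθ h

theorem angle_le_of_norm_mul_norm_mul_cos_le_inner {x y : E} {θ : ℝ} (hx : x ≠ 0) (hy : y ≠ 0)
    (hθ₀ : 0 ≤ θ) (hθπ : θ ≤ π) (h : ‖x‖ * ‖y‖ * cos θ ≤ ⟪x, y⟫) : angle x y ≤ θ := by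
  have hxy : 0 < ‖x‖ * ‖y‖ := by positivity
  rw [angle, ← arccos_cos hθ₀ hθπ]
  exact arccos_le_arccos ((le_div_iff₀ hxy).2 (by linarith))

theorem norm_sum_mul_le_inner_sum {ι : Type*} (s : Finset ι) (v : ι → E) (e : E) {c : ℝ}
    (hc : 0 ≤ c) (h : ∀ i ∈ s, ‖v i‖ * c ≤ ⟪v i, e⟫) :
    ‖∑ i ∈ s, v i‖ * c ≤ ⟪∑ i ∈ s, v i, e⟫ :=
  calc ‖∑ i ∈ s, v i‖ * c ≤ (∑ i ∈ s, ‖v i‖) * c := by gcongr; exact norm_sum_le s v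
    _ = ∑ i ∈ s, ‖v i‖ * c := Finset.sum_mul s _ c
    _ ≤ ∑ i ∈ s, ⟪v i, e⟫ := Finset.sum_le_sum h
    _ = ⟪∑ i ∈ s, v i, e⟫ := (sum_inner s v e).symm

theorem angle_sum_le_of_forall_angle_le {ι : Type*} (s : Finset ι) (v : ι → E) {e : E}
    (he : e ≠ 0) (hsum : ∑ i ∈ s, v i ≠ 0) {θ : ℝ} (hθ₀ : 0 ≤ θ) (hθ : θ ≤ π / 2)
    (h : ∀ i ∈ s, angle (v i) e ≤ θ) : angle (∑ i ∈ s, v i) e ≤ θ := by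
  have hθπ : θ ≤ π := hθ.trans (by linarith [pi_pos])
  have hcos : 0 ≤ ‖e‖ * cos θ :=
    mul_nonneg (norm_nonneg e) (cos_nonneg_of_mem_Icc ⟨by linarith [pi_pos], hθ⟩)
  refine angle_le_of_norm_mul_norm_mul_cos_le_inner hsum he hθ₀ hθπ ?_
  rw [mul_assoc]
  refine norm_sum_mul_le_inner_sum s v e hcos fun i hi => ?_
  rw [← mul_assoc]
  exact norm_mul_norm_mul_cos_le_inner_of_angle_le hθπ (h i hi)

end InnerProductGeometry

theorem angle_sum_le_max_angle_general
    {E : Type*} [NormedAddCommGroup E] [InnerProductSpace ℝ E]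
    (e : E) (he : e ≠ 0) {l : ℕ} (hl : 0 < l) (v : Fin l → E)
    (hinner : ∀ i, 0 ≤ ⟪v i, e⟫)
    (hsum : (∑ i, v i) ≠ 0) :
    angle (∑ i, v i) e ≤
      Finset.univ.sup' ⟨⟨0, hl⟩, Finset.mem_univ _⟩
        (fun i => angle (v i) e) := by
  obtain ⟨j, -, hj⟩ := Finset.exists_mem_eq_sup' ⟨⟨0, hl⟩, Finset.mem_univ _⟩
    (fun i => angle (v i) e)
  refine angle_sum_le_of_forall_angle_le _ v he hsum ?_ ?_ fun i _ =>
    Finset.le_sup' (fun i => angle (v i) e) (Finset.mem_univ i)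
  · rw [hj]; exact angle_nonneg _ _
  · rw [hj]; exact angle_le_pi_div_two_of_inner_nonneg (hinner j)

theorem angle_sum_le_max_angle
    {E : Type*} [NormedAddCommGroup E] [InnerProductSpace ℝ E]
    (e : E) (he : e ≠ 0) {l : ℕ} (hl : 0 < l) (v : Fin l → E)
    (hv : ∀ i, v i ≠ 0) (hinner : ∀ i, 0 ≤ ⟪v i, e⟫)
    (hsum : (∑ i, v i) ≠ 0) :
    angle (∑ i, v i) e ≤
      Finset.univ.sup' ⟨⟨0, hl⟩, Finset.mem_univ _⟩
        (fun i => angle (v i) e) :=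
  angle_sum_le_max_angle_general e he hl v hinner hsum
end

section
/- Let E be a finite-dimensional real inner product space of dimension at least 2, let e be a unit vector of E, let J be a nonzero vector of E with ⟨J, e⟩ > 0, and let α = angle(J, e). Let S ⊆ E be a set of unit vectors with the following property: for every nonzero q ∈ E with ⟨q, J⟩ = 0 there exist u, v ∈ S such that ⟨q, e + u⟩ = 0 and ⟨q, e − v⟩ = 0. Then the (Euclidean) diameter of S satisfies diam S ≥ 2 sin α. -/
open scoped RealInnerProductSpace

open InnerProductGeometry

/-!
Test the hypothesis on `q = e - proj_J e`, the component of `e` orthogonal to `J`: it has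
`‖q‖ = sin α` and `⟪q, e⟫ = ‖q‖²`. The resulting `u, v ∈ S` satisfy `⟪q, u⟫ = -⟪q, e⟫` and
`⟪q, v⟫ = ⟪q, e⟫`, so Cauchy–Schwarz gives `‖q‖ ‖v - u‖ ≥ ⟪q, v - u⟫ = 2 ‖q‖²`,
i.e. `‖v - u‖ ≥ 2 sin α`.
-/

section

variable {V : Type*} [NormedAddCommGroup V] [InnerProductSpace ℝ V]

namespace Submodule

lemma real_inner_starProjection_self (K : Submodule ℝ V) [K.HasOrthogonalProjection] (v : V) :
    ⟪K.starProjection v, v⟫ = ‖K.starProjection v‖ ^ 2 := by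
  conv_lhs => rw [← starProjection_eq_self_iff.2 (K.starProjection_apply_mem v)]
  rw [K.inner_starProjection_left_eq_right, real_inner_self_eq_norm_sq]

lemma norm_starProjection_singleton (x y : V) :
    ‖(ℝ ∙ x).starProjection y‖ = ‖y‖ * |Real.cos (angle x y)| := by
  rcases eq_or_ne x 0 with rfl | hx
  · simp
  rw [starProjection_singleton, norm_smul, ← cos_angle_mul_norm_mul_norm]
  simp only [Real.ringHom_apply, norm_div, norm_mul, Real.norm_eq_abs, abs_norm, norm_pow]
  field_simp

lemma norm_starProjection_orthogonal_singleton (x y : V) :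
    ‖(ℝ ∙ x)ᗮ.starProjection y‖ = ‖y‖ * Real.sin (angle x y) := by
  have hpyth := (ℝ ∙ x).norm_sq_eq_add_norm_sq_starProjection y
  rw [norm_starProjection_singleton, mul_pow, sq_abs] at hpyth
  refine (pow_left_inj₀ (norm_nonneg _) (by positivity [sin_angle_nonneg x y]) two_ne_zero).1 ?_
  rw [mul_pow, Real.sin_sq]
  linear_combination -hpyth

end Submodule

lemma two_mul_norm_le_norm_sub_of_inner_eq_zero {q e u v : V} (hqe : ⟪q, e⟫ = ‖q‖ ^ 2)
    (hu : ⟪q, e + u⟫ = 0) (hv : ⟪q, e - v⟫ = 0) : 2 * ‖q‖ ≤ ‖v - u‖ := by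
  rcases eq_or_ne q 0 with rfl | hq
  · simp
  have key : ⟪q, v - u⟫ = 2 * ‖q‖ ^ 2 := by
    rw [inner_add_right] at hu
    rw [inner_sub_right] at hv
    rw [inner_sub_right, ← hqe]
    linarith
  refine le_of_mul_le_mul_left ?_ (norm_pos_iff.2 hq)
  calc ‖q‖ * (2 * ‖q‖) = ⟪q, v - u⟫ := by rw [key]; ring
    _ ≤ ‖q‖ * ‖v - u‖ := real_inner_le_norm q (v - u)

end

theorem diam_ge_two_sin_angle_general
    {E : Type*} [NormedAddCommGroup E] [InnerProductSpace ℝ E]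
    (e J : E) (he : ‖e‖ = 1)
    (S : Set E) (hS : ∀ x ∈ S, ‖x‖ = 1)
    (hprop : ∀ q : E, q ≠ 0 → ⟪q, J⟫ = 0 →
      ∃ u ∈ S, ∃ v ∈ S, ⟪q, e + u⟫ = 0 ∧ ⟪q, e - v⟫ = 0) :
    2 * Real.sin (angle J e) ≤ Metric.diam S := by
  set q := (ℝ ∙ J)ᗮ.starProjection e
  have hq : ‖q‖ = Real.sin (angle J e) := by
    rw [Submodule.norm_starProjection_orthogonal_singleton, he, one_mul]
  rcases eq_or_ne q 0 with hq0 | hq0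
  · rw [← hq, hq0, norm_zero, mul_zero]
    exact Metric.diam_nonneg
  have hqJ : ⟪q, J⟫ = 0 :=
    Submodule.inner_left_of_mem_orthogonal (Submodule.mem_span_singleton_self J)
      (Submodule.starProjection_apply_mem _ e)
  obtain ⟨u, hu, v, hv, hqu, hqv⟩ := hprop q hq0 hqJ
  have hS_bdd : Bornology.IsBounded S :=
    (Metric.isBounded_sphere (x := (0 : E)) (r := 1)).subset fun x hx ↦
      mem_sphere_zero_iff_norm.2 (hS x hx)
  calc 2 * Real.sin (angle J e) = 2 * ‖q‖ := by rw [hq]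
    _ ≤ ‖v - u‖ := two_mul_norm_le_norm_sub_of_inner_eq_zero
        ((ℝ ∙ J)ᗮ.real_inner_starProjection_self e) hqu hqv
    _ = dist v u := (dist_eq_norm v u).symm
    _ ≤ Metric.diam S := Metric.dist_le_diam_of_mem hS_bdd hv hu

theorem diam_ge_two_sin_angle
    {E : Type*} [NormedAddCommGroup E] [InnerProductSpace ℝ E]
    [FiniteDimensional ℝ E] (hdim : 2 ≤ Module.finrank ℝ E)
    (e J : E) (he : ‖e‖ = 1) (hJ : J ≠ 0) (hJe : 0 < ⟪J, e⟫)
    (S : Set E) (hS : ∀ x ∈ S, ‖x‖ = 1)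
    (hprop : ∀ q : E, q ≠ 0 → ⟪q, J⟫ = 0 →
      ∃ u ∈ S, ∃ v ∈ S, ⟪q, e + u⟫ = 0 ∧ ⟪q, e - v⟫ = 0) :
    2 * Real.sin (angle J e) ≤ Metric.diam S :=
  diam_ge_two_sin_angle_general e J he S hS hprop
end
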